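/- Fix a real number ν with 1 < ν < √2. For ε > 0 small enough that ν·tan(ν·ε) ∈ (0,1), set t_ε = ν·artanh(ν·tan(ν·ε)) + ν·ε, h₁(t) = cos(νε)·cosh((t − νε)/ν) − ν·sin(νε)·sinh((t − νε)/ν), and define the slope s_ε = (cos(6ε/ν) − h₁(t_ε)) / (3νε·(2/ν² − 1)). Then s_ε / sin(6ε/ν) converges to (ν⁶ + ν⁴ − 36) / (36·(2 − ν²)) as ε → 0⁺. -/

import Mathlib

open Filter

noncomputable def Real.artanh' (x : ℝ) : ℝ := (1 / 2) * Real.log ((1 + x) / (1 - x))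

/-!
Since `tanh ((t_ε - νε)/ν) = ν tan (νε)`, the value `h₁(t_ε)` is `√(cos² (νε) - ν² sin² (νε))`.
Rationalising, `cos (6ε/ν) - h₁(t_ε) = ((1 + ν²) sin² (νε) - sin² (6ε/ν)) / (cos (6ε/ν) + h₁(t_ε))`,
and after dividing numerator and denominator by `ε²` every factor is continuous in `sin x / x`,
so the limit follows from `sin x / x → 1`.
-/

open Topology Real

lemma Real.artanh'_eq_artanh {x : ℝ} (hx : x ∈ Set.Icc (-1) 1) : artanh' x = artanh x :=
  (artanh_eq_half_log hx).symm

lemma mul_cosh_artanh'_div_sub_mul_sinh {a c : ℝ} (hc : 0 < c) (ha : |a| < c) :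
    c * cosh (artanh' (a / c)) - a * sinh (artanh' (a / c)) = √(c ^ 2 - a ^ 2) := by
  have hx : a / c ∈ Set.Ioo (-1) 1 := by
    rw [Set.mem_Ioo, lt_div_iff₀ hc, div_lt_one hc]
    constructor <;> linarith [abs_lt.mp ha]
  have hq : 0 < c ^ 2 - a ^ 2 := by nlinarith [abs_nonneg a, sq_abs a]
  have hroot : √(1 - (a / c) ^ 2) = √(c ^ 2 - a ^ 2) / c := by
    rw [show 1 - (a / c) ^ 2 = (c ^ 2 - a ^ 2) / c ^ 2 by field_simp, sqrt_div' _ (sq_nonneg c),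
      sqrt_sq hc.le]
  rw [artanh'_eq_artanh (Set.Ioo_subset_Icc_self hx), cosh_artanh hx, sinh_artanh hx, hroot]
  have : √(c ^ 2 - a ^ 2) ≠ 0 := (sqrt_pos.mpr hq).ne'
  field_simp
  rw [sq_sqrt hq.le]

lemma tendsto_sin_mul_div_self_nhdsGT (a : ℝ) :
    Tendsto (fun x => sin (a * x) / x) (𝓝[>] 0) (𝓝 a) := by
  have h := ((hasDerivAt_id (0 : ℝ)).const_mul a).sin.tendsto_slope_zero_right
  simpa [div_eq_inv_mul] using h

lemma sub_div_mul_div_div_eq {C R S m ε : ℝ} (hε : ε ≠ 0) (hCR : C + R ≠ 0) :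
    (C - R) / (m * ε) / S = (C ^ 2 - R ^ 2) / ε ^ 2 / ((C + R) * m * (S / ε)) := by
  rcases eq_or_ne m 0 with rfl | hm
  · simp
  rcases eq_or_ne S 0 with rfl | hS
  · simp
  field_simp
  ring

lemma eventually_abs_mul_sin_lt_cos (ν : ℝ) : ∀ᶠ ε in 𝓝 0, |ν * sin (ν * ε)| < cos (ν * ε) := by
  have h : Tendsto (fun ε => cos (ν * ε) - |ν * sin (ν * ε)|) (𝓝 0) (𝓝 1) :=
    (by fun_prop : Continuous fun ε => cos (ν * ε) - |ν * sin (ν * ε)|).tendsto' 0 _ (by simp)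
  filter_upwards [h.eventually (lt_mem_nhds zero_lt_one)] with ε hε using by linarith

section

variable {ν : ℝ}

lemma cos_mul_cosh_sub_sinh_artanh'_mul_tan {ε : ℝ} (h : |ν * sin (ν * ε)| < cos (ν * ε)) :
    cos (ν * ε) * cosh (artanh' (ν * tan (ν * ε)))
      - ν * sin (ν * ε) * sinh (artanh' (ν * tan (ν * ε)))
      = √(cos (ν * ε) ^ 2 - (ν * sin (ν * ε)) ^ 2) := by
  rw [tan_eq_sin_div_cos, ← mul_div_assoc,
    mul_cosh_artanh'_div_sub_mul_sinh ((abs_nonneg _).trans_lt h) h]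

lemma cos_sq_sub_sqrt_sq {ε : ℝ} (h : |ν * sin (ν * ε)| < cos (ν * ε)) :
    cos (6 * ε / ν) ^ 2 - √(cos (ν * ε) ^ 2 - (ν * sin (ν * ε)) ^ 2) ^ 2
      = (1 + ν ^ 2) * sin (ν * ε) ^ 2 - sin (6 * ε / ν) ^ 2 := by
  rw [sq_sqrt (by nlinarith [abs_nonneg (ν * sin (ν * ε)), sq_abs (ν * sin (ν * ε))])]
  linear_combination sin_sq_add_cos_sq (6 * ε / ν) - sin_sq_add_cos_sq (ν * ε)

lemma tendsto_slope_div_sin (hν : 0 < ν) (hν2 : ν ^ 2 < 2) :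
    Tendsto (fun ε => (cos (6 * ε / ν) - √(cos (ν * ε) ^ 2 - (ν * sin (ν * ε)) ^ 2))
        / (3 * ν * ε * (2 / ν ^ 2 - 1)) / sin (6 * ε / ν))
      (𝓝[>] 0) (𝓝 ((ν ^ 6 + ν ^ 4 - 36) / (36 * (2 - ν ^ 2)))) := by
  have hk : 0 < 2 / ν ^ 2 - 1 := by rw [sub_pos, one_lt_div (by positivity)]; exact hν2
  have hC : Tendsto (fun ε => cos (6 * ε / ν) + √(cos (ν * ε) ^ 2 - (ν * sin (ν * ε)) ^ 2))
      (𝓝 0) (𝓝 (1 + 1)) := (by fun_prop : Continuous _).tendsto' 0 _ (by simp)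
  have hsin6 : Tendsto (fun ε => sin (6 * ε / ν) / ε) (𝓝[>] 0) (𝓝 (6 / ν)) := by
    simpa only [div_mul_eq_mul_div] using tendsto_sin_mul_div_self_nhdsGT (6 / ν)
  have hlim := ((((tendsto_sin_mul_div_self_nhdsGT ν).pow 2).const_mul (1 + ν ^ 2)).sub
    (hsin6.pow 2)).div (((hC.mono_left nhdsWithin_le_nhds).mul_const
      (3 * ν * (2 / ν ^ 2 - 1))).mul hsin6) (by positivity)
  have hval : ((1 + ν ^ 2) * ν ^ 2 - (6 / ν) ^ 2) / ((1 + 1) * (3 * ν * (2 / ν ^ 2 - 1)) * (6 / ν))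
      = (ν ^ 6 + ν ^ 4 - 36) / (36 * (2 - ν ^ 2)) := by
    field_simp
    ring
  rw [hval] at hlim
  refine hlim.congr' ?_
  filter_upwards [self_mem_nhdsWithin, nhdsWithin_le_nhds (eventually_abs_mul_sin_lt_cos ν),
    nhdsWithin_le_nhds (hC.eventually_ne (by norm_num : (1 : ℝ) + 1 ≠ 0))]
    with ε (hε : 0 < ε) hsmall hCR
  rw [Pi.div_apply, mul_right_comm _ ε, sub_div_mul_div_div_eq hε.ne' hCR,
    cos_sq_sub_sqrt_sq hsmall]
  ring

end

theorem slope_asymptotics (ν : ℝ) (hν1 : 1 < ν) (hν2 : ν < Real.sqrt 2)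
    (tε : ℝ → ℝ)
    (htε : ∀ ε, tε ε = ν * Real.artanh' (ν * Real.tan (ν * ε)) + ν * ε)
    (h₁ : ℝ → ℝ → ℝ)
    (hh₁ : ∀ ε t, h₁ ε t =
      Real.cos (ν * ε) * Real.cosh ((t - ν * ε) / ν)
      - ν * Real.sin (ν * ε) * Real.sinh ((t - ν * ε) / ν))
    (s : ℝ → ℝ)
    (hs : ∀ ε, s ε =
      (Real.cos (6 * ε / ν) - h₁ ε (tε ε)) / (3 * ν * ε * (2 / ν ^ 2 - 1))) :
    Tendsto (fun ε => s ε / Real.sin (6 * ε / ν)) (nhdsWithin 0 (Set.Ioi 0))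
      (nhds ((ν ^ 6 + ν ^ 4 - 36) / (36 * (2 - ν ^ 2)))) := by
  have hν0 : 0 < ν := zero_lt_one.trans hν1
  have hν_sq : ν ^ 2 < 2 := (lt_sqrt hν0.le).mp hν2
  refine (tendsto_slope_div_sin hν0 hν_sq).congr' ?_
  filter_upwards [nhdsWithin_le_nhds (eventually_abs_mul_sin_lt_cos ν)] with ε hε
  rw [hs, hh₁, htε, add_sub_cancel_right, mul_div_cancel_left₀ _ hν0.ne',
    cos_mul_cosh_sub_sinh_artanh'_mul_tan hε]
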